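/- arXiv:2402.07019 — 3 statements merged into one kernel-verified Lean document; each statement's English description precedes it below -/
import Mathlib

section
/- (Exact form of Proposition 1.) Let M be a finite discounted MDP, let θ^L ∈ ℝ^{S×A} with π^L = π_{θ^L} the softmax policy, let R̄ be a reward function, π^T any policy, h ∈ ℕ, α > 0, and let φ ∈ ℝ^d ↦ R_φ be a reward parameterization with each map φ ↦ R_φ(s,a) differentiable. Define the updated parameter θ_new(φ) = θ^L + α Σ_{s,a} d^{π^L}(s) π^L(a|s) [∇_θ log π_θ(a|s)]_{θ = θ^L} · Q^{π^L}_{R_φ,h}(s,a) ∈ ℝ^{S×A}. Then the product of the Jacobian of θ_new at φ with the gradient of the surrogate performance, namely (D_φ θ_new(φ))ᵀ [∇_θ J(π_θ; R̄, π^T)]_{θ = θ^L} ∈ ℝ^d, equals α · ∇_φ I_h(R_φ | R̄, π^T, π^L). -/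
open scoped BigOperators

structure MDP (S A : Type*) [Fintype S] [Fintype A] where
  T : S → A → S → ℝ
  T_nonneg : ∀ s a s', 0 ≤ T s a s'
  T_sum_one : ∀ s a, ∑ s', T s a s' = 1
  P0 : S → ℝ
  P0_nonneg : ∀ s, 0 ≤ P0 s
  P0_sum_one : ∑ s, P0 s = 1
  disc : ℝ
  disc_nonneg : 0 ≤ disc
  disc_lt_one : disc < 1

variable {S A : Type*} [Fintype S] [Fintype A] [DecidableEq S] [DecidableEq A]

def IsPolicy (π : S → A → ℝ) : Prop :=
  (∀ s a, 0 ≤ π s a) ∧ ∀ s, ∑ a, π s a = 1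

def detPol (π : S → A) : S → A → ℝ := fun s a => if a = π s then 1 else 0

def stateDist (M : MDP S A) (π : S → A → ℝ) (s0 : S) : ℕ → S → ℝ
  | 0 => fun s => if s = s0 then 1 else 0
  | (t+1) => fun s' => ∑ s, ∑ a, stateDist M π s0 t s * π s a * M.T s a s'

noncomputable def Val (M : MDP S A) (π : S → A → ℝ) (R : S → A → ℝ) (s0 : S) : ℝ :=
  ∑' t : ℕ, M.disc ^ t * ∑ s, stateDist M π s0 t s * ∑ a, π s a * R s a

noncomputable def Qval (M : MDP S A) (π : S → A → ℝ) (R : S → A → ℝ) (s : S) (a : A) : ℝ :=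
  R s a + M.disc * ∑ s', M.T s a s' * Val M π R s'

noncomputable def Adv (M : MDP S A) (π : S → A → ℝ) (R : S → A → ℝ) (s : S) (a : A) : ℝ :=
  Qval M π R s a - Val M π R s

noncomputable def Vstar (M : MDP S A) (R : S → A → ℝ) (s : S) : ℝ :=
  sSup {v : ℝ | ∃ π, IsPolicy π ∧ Val M π R s = v}

def IsOptimal (M : MDP S A) (R : S → A → ℝ) (π : S → A → ℝ) : Prop :=
  ∀ s, Val M π R s = Vstar M R s

noncomputable def dOcc (M : MDP S A) (π : S → A → ℝ) (s0 : S) (s : S) : ℝ :=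
  (1 - M.disc) * ∑' t : ℕ, M.disc ^ t * stateDist M π s0 t s

noncomputable def dP0 (M : MDP S A) (π : S → A → ℝ) (s : S) : ℝ :=
  ∑ s0, M.P0 s0 * dOcc M π s0 s

noncomputable def Qh (M : MDP S A) (π : S → A → ℝ) (R : S → A → ℝ) : ℕ → S → A → ℝ
  | 0 => R
  | (h+1) => fun s a =>
      R s a + M.disc * ∑ s', M.T s a s' * ∑ a', π s' a' * Qh M π R h s' a'

noncomputable def Vh (M : MDP S A) (π : S → A → ℝ) (R : S → A → ℝ) (h : ℕ) (s : S) : ℝ :=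
  ∑ a, π s a * Qh M π R h s a

noncomputable def Advh (M : MDP S A) (π : S → A → ℝ) (R : S → A → ℝ) (h : ℕ) (s : S) (a : A) : ℝ :=
  Qh M π R h s a - Vh M π R h s

noncomputable def softmax (θ : EuclideanSpace ℝ (S × A)) (s : S) (a : A) : ℝ :=
  Real.exp (θ (s, a)) / ∑ b, Real.exp (θ (s, b))

noncomputable def gradLogSoftmax (θ : EuclideanSpace ℝ (S × A)) (s : S) (a : A) :
    EuclideanSpace ℝ (S × A) :=
  WithLp.toLp 2 (fun p => fderiv ℝ (fun θ' => Real.log (softmax θ' s a)) θ (EuclideanSpace.single p 1))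

/-- The depth-`h` informativeness criterion `I_h(R | R̄, π^T, π^L)`. -/
noncomputable def IhCrit (M : MDP S A) (Rbar : S → A → ℝ) (πT πL : S → A → ℝ)
    (h : ℕ) (R : S → A → ℝ) : ℝ :=
  ∑ s, ∑ a, dP0 M πL s * dP0 M πT s * (πL s a) ^ 2 *
    (Adv M πT Rbar s a - ∑ a', πL s a' * Adv M πT Rbar s a') *
    Advh M πL R h s a

/-- The depth-1 informativeness criterion `I₁(R | R̄, π^T, π^L)`. -/
noncomputable def I1 (M : MDP S A) (Rbar : S → A → ℝ) (πT πL : S → A → ℝ)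
    (R : S → A → ℝ) : ℝ :=
  ∑ s, ∑ a, dP0 M πL s * dP0 M πT s * (πL s a) ^ 2 *
    (Adv M πT Rbar s a - ∑ a', πL s a' * Adv M πT Rbar s a') *
    (R s a - ∑ b, πL s b * R s b)

/-- Uniform distribution over the argmax set of `f`. -/
noncomputable def argmaxUniform (f : A → ℝ) : A → ℝ := fun a =>
  if (∀ b, f b ≤ f a) then
    ((Finset.univ.filter fun a' : A => ∀ b, f b ≤ f a').card : ℝ)⁻¹
  else 0

/-- The updated policy parameter after one policy-gradient step with reward `R`. -/
noncomputable def thetaNew (M : MDP S A) (θL : EuclideanSpace ℝ (S × A)) (α : ℝ) (h : ℕ)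
    (R : S → A → ℝ) : EuclideanSpace ℝ (S × A) :=
  θL + α • ∑ s, ∑ a,
    (dP0 M (softmax θL) s * softmax θL s a * Qh M (softmax θL) R h s a) •
      gradLogSoftmax θL s a

/-- The surrogate performance `J(π_θ; R̄, π^T)`. -/
noncomputable def Jsur (M : MDP S A) (Rbar : S → A → ℝ) (πT : S → A → ℝ)
    (θ : EuclideanSpace ℝ (S × A)) : ℝ :=
  ∑ s, dP0 M πT s * ∑ a, softmax θ s a * Adv M πT Rbar s a


section Aux

set_option linter.unusedSectionVars false
set_option linter.unusedVariables false

noncomputable abbrev pr (p : S × A) : EuclideanSpace ℝ (S × A) →L[ℝ] ℝ :=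
  EuclideanSpace.proj (𝕜 := ℝ) p

lemma Zpos (θ : EuclideanSpace ℝ (S × A)) (s : S) [Nonempty A] : 0 < ∑ b, Real.exp (θ (s, b)) :=
  Finset.sum_pos (fun _ _ => Real.exp_pos _) Finset.univ_nonempty

lemma softmax_pos [Nonempty A] (θ : EuclideanSpace ℝ (S × A)) (s : S) (a : A) :
    0 < softmax θ s a := div_pos (Real.exp_pos _) (Zpos θ s)

lemma haZ (θ : EuclideanSpace ℝ (S × A)) (s : S) :
    HasFDerivAt (fun θ' : EuclideanSpace ℝ (S × A) => ∑ b, Real.exp (θ' (s, b)))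
      (∑ b, Real.exp (θ (s, b)) • pr (s, b)) θ :=
  HasFDerivAt.fun_sum fun b _ => (pr (s, b)).hasFDerivAt.exp

noncomputable def Lsm (θ : EuclideanSpace ℝ (S × A)) (s : S) (a : A) :
    EuclideanSpace ℝ (S × A) →L[ℝ] ℝ :=
  pr (s, a) - (∑ b, Real.exp (θ (s, b)))⁻¹ • ∑ b, Real.exp (θ (s, b)) • pr (s, b)

lemma hasFDerivAt_logsoftmax [Nonempty A] (θ : EuclideanSpace ℝ (S × A)) (s : S) (a : A) :
    HasFDerivAt (fun θ' => Real.log (softmax θ' s a)) (Lsm θ s a) θ := by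
  have heq : (fun θ' : EuclideanSpace ℝ (S × A) => Real.log (softmax θ' s a)) =
      fun θ' => θ' (s, a) - Real.log (∑ b, Real.exp (θ' (s, b))) := by
    funext θ'
    rw [softmax, Real.log_div (Real.exp_ne_zero _) (Zpos θ' s).ne', Real.log_exp]
  rw [heq]
  exact ((pr (s, a)).hasFDerivAt).sub ((haZ θ s).log (Zpos θ s).ne')

lemma hasFDerivAt_softmax [Nonempty A] (θ : EuclideanSpace ℝ (S × A)) (s : S) (a : A) :
    HasFDerivAt (fun θ' => softmax θ' s a) (softmax θ s a • Lsm θ s a) θ := by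
  have h := (hasFDerivAt_logsoftmax θ s a).exp
  rw [Real.exp_log (softmax_pos θ s a)] at h
  have heq : (fun θ' : EuclideanSpace ℝ (S × A) => Real.exp (Real.log (softmax θ' s a))) =
      fun θ' => softmax θ' s a := by
    funext θ'; rw [Real.exp_log (softmax_pos θ' s a)]
  rwa [heq] at h

lemma Lsm_apply [Nonempty A] (θ : EuclideanSpace ℝ (S × A)) (s : S) (a : A)
    (v : EuclideanSpace ℝ (S × A)) :
    Lsm θ s a v = v (s, a) - ∑ b, softmax θ s b * v (s, b) := by
  simp only [Lsm, ContinuousLinearMap.sub_apply, ContinuousLinearMap.smul_apply,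
    ContinuousLinearMap.sum_apply, PiLp.proj_apply, smul_eq_mul, softmax]
  rw [Finset.mul_sum]
  congr 1
  refine Finset.sum_congr rfl fun b _ => ?_
  field_simp

lemma Lsm_single [Nonempty A] (θ : EuclideanSpace ℝ (S × A)) (s : S) (a : A) (p : S × A) :
    Lsm θ s a (EuclideanSpace.single p 1) =
      (if p = (s, a) then 1 else 0) - (if p.1 = s then softmax θ s p.2 else 0) := by
  obtain ⟨t, b⟩ := p
  rw [Lsm_apply]
  simp only [EuclideanSpace.single_apply]
  congr 1
  · simp [Prod.ext_iff, eq_comm]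
  · by_cases hts : t = s
    · subst hts
      simp [Prod.mk.injEq, mul_ite, Finset.sum_ite_eq']
    · simp [Prod.ext_iff, Ne.symm hts, hts]

lemma gradLogSoftmax_apply [Nonempty A] (θ : EuclideanSpace ℝ (S × A)) (s : S) (a : A)
    (p : S × A) :
    gradLogSoftmax θ s a p =
      (if p = (s, a) then 1 else 0) - (if p.1 = s then softmax θ s p.2 else 0) := by
  show fderiv ℝ (fun θ' => Real.log (softmax θ' s a)) θ (EuclideanSpace.single p 1) = _
  rw [(hasFDerivAt_logsoftmax θ s a).fderiv, Lsm_single]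

lemma hasFDerivAt_Jsur [Nonempty A] (M : MDP S A) (Rbar : S → A → ℝ) (πT : S → A → ℝ)
    (θ : EuclideanSpace ℝ (S × A)) :
    HasFDerivAt (Jsur M Rbar πT)
      (∑ s, dP0 M πT s • ∑ a, Adv M πT Rbar s a • (softmax θ s a • Lsm θ s a)) θ := by
  refine HasFDerivAt.fun_sum fun s _ => HasFDerivAt.const_mul ?_ _
  exact HasFDerivAt.fun_sum fun a _ => (hasFDerivAt_softmax θ s a).mul_const _

lemma fderiv_Jsur_single [Nonempty A] (M : MDP S A) (Rbar : S → A → ℝ) (πT : S → A → ℝ)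
    (θ : EuclideanSpace ℝ (S × A)) (t : S) (b : A) :
    fderiv ℝ (Jsur M Rbar πT) θ (EuclideanSpace.single ((t, b) : S × A) 1) =
      dP0 M πT t * (softmax θ t b *
        (Adv M πT Rbar t b - ∑ a, softmax θ t a * Adv M πT Rbar t a)) := by
  rw [(hasFDerivAt_Jsur M Rbar πT θ).fderiv]
  simp only [ContinuousLinearMap.sum_apply, ContinuousLinearMap.smul_apply, smul_eq_mul]
  have hsum : ∀ s : S, (∑ a, Adv M πT Rbar s a *
        (softmax θ s a * Lsm θ s a (EuclideanSpace.single ((t, b) : S × A) 1))) =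
      if s = t then softmax θ t b *
        (Adv M πT Rbar t b - ∑ a, softmax θ t a * Adv M πT Rbar t a) else 0 := by
    intro s
    by_cases hst : s = t
    · subst hst
      rw [if_pos rfl]
      have h1 : ∀ a, Adv M πT Rbar s a *
          (softmax θ s a * Lsm θ s a (EuclideanSpace.single ((s, b) : S × A) 1))
          = (if b = a then softmax θ s a * Adv M πT Rbar s a else 0)
            - softmax θ s b * (softmax θ s a * Adv M πT Rbar s a) := by
        intro a
        rw [Lsm_single]
        by_cases hba : b = a
        · subst hba; simp; ring
        · simp [Prod.ext_iff, hba]; ring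
      rw [Finset.sum_congr rfl fun a _ => h1 a, Finset.sum_sub_distrib,
        Finset.sum_ite_eq Finset.univ b (fun a => softmax θ s a * Adv M πT Rbar s a)]
      simp only [Finset.mem_univ, if_true]
      rw [← Finset.mul_sum]
      ring
    · rw [if_neg hst]
      refine Finset.sum_eq_zero fun a _ => ?_
      rw [Lsm_single]
      simp [Prod.ext_iff, Ne.symm hst]
  rw [Finset.sum_congr rfl fun s _ => by rw [hsum s]]
  simp [mul_ite, Finset.sum_ite_eq']

end Aux

section AuxD

set_option linter.unusedSectionVars false
set_option linter.unusedVariables false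

variable {d : ℕ} (M : MDP S A) (π : S → A → ℝ)
  (Rφ : EuclideanSpace ℝ (Fin d) → S → A → ℝ)
  (φ : EuclideanSpace ℝ (Fin d)) (v : EuclideanSpace ℝ (Fin d))

lemma Qh_diffAt (hRφ : ∀ s a, Differentiable ℝ (fun φ => Rφ φ s a)) (h : ℕ) (s : S) (a : A) :
    DifferentiableAt ℝ (fun φ' => Qh M π (Rφ φ') h s a) φ := by
  induction h generalizing s a with
  | zero => exact (hRφ s a) φ
  | succ h ih =>
      simp only [Qh]
      exact ((hRφ s a) φ).add
        ((DifferentiableAt.fun_sum fun s' _ =>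
          (DifferentiableAt.fun_sum fun a' _ => (ih s' a').const_mul _).const_mul _).const_mul _)

lemma Qh_fderiv (hRφ : ∀ s a, Differentiable ℝ (fun φ => Rφ φ s a)) (h : ℕ) (s : S) (a : A) :
    fderiv ℝ (fun φ' => Qh M π (Rφ φ') h s a) φ v =
      Qh M π (fun s' a' => fderiv ℝ (fun φ' => Rφ φ' s' a') φ v) h s a := by
  induction h generalizing s a with
  | zero => rfl
  | succ h ih =>
      have hQ : ∀ s' a', DifferentiableAt ℝ (fun φ' => Qh M π (Rφ φ') h s' a') φ :=
        fun s' a' => Qh_diffAt M π Rφ φ hRφ h s' a'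
      have hinner : ∀ s', DifferentiableAt ℝ
          (fun φ' => ∑ a', π s' a' * Qh M π (Rφ φ') h s' a') φ :=
        fun s' => DifferentiableAt.fun_sum fun a' _ => (hQ s' a').const_mul _
      have houter : DifferentiableAt ℝ
          (fun φ' => ∑ s', M.T s a s' * ∑ a', π s' a' * Qh M π (Rφ φ') h s' a') φ :=
        DifferentiableAt.fun_sum fun s' _ => (hinner s').const_mul _
      simp only [Qh]
      rw [fderiv_fun_add ((hRφ s a) φ) (houter.const_mul _), fderiv_const_mul houter,
        fderiv_fun_sum fun s' _ => (hinner s').const_mul _]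
      simp only [ContinuousLinearMap.add_apply, ContinuousLinearMap.smul_apply,
        ContinuousLinearMap.sum_apply, smul_eq_mul]
      congr 1
      congr 1
      refine Finset.sum_congr rfl fun s' _ => ?_
      rw [fderiv_const_mul (hinner s'), fderiv_fun_sum fun a' _ => (hQ s' a').const_mul _]
      simp only [ContinuousLinearMap.smul_apply, ContinuousLinearMap.sum_apply, smul_eq_mul]
      congr 1
      refine Finset.sum_congr rfl fun a' _ => ?_
      rw [fderiv_const_mul (hQ s' a')]
      simp only [ContinuousLinearMap.smul_apply, smul_eq_mul]
      rw [ih s' a']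

lemma Advh_diffAt (hRφ : ∀ s a, Differentiable ℝ (fun φ => Rφ φ s a)) (h : ℕ) (s : S) (a : A) :
    DifferentiableAt ℝ (fun φ' => Advh M π (Rφ φ') h s a) φ := by
  simp only [Advh, Vh]
  exact (Qh_diffAt M π Rφ φ hRφ h s a).sub
    (DifferentiableAt.fun_sum fun a' _ => (Qh_diffAt M π Rφ φ hRφ h s a').const_mul _)

lemma Advh_fderiv (hRφ : ∀ s a, Differentiable ℝ (fun φ => Rφ φ s a)) (h : ℕ) (s : S) (a : A) :
    fderiv ℝ (fun φ' => Advh M π (Rφ φ') h s a) φ v =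
      Advh M π (fun s' a' => fderiv ℝ (fun φ' => Rφ φ' s' a') φ v) h s a := by
  simp only [Advh, Vh]
  rw [fderiv_fun_sub (Qh_diffAt M π Rφ φ hRφ h s a)
    (DifferentiableAt.fun_sum fun a' _ => (Qh_diffAt M π Rφ φ hRφ h s a').const_mul _),
    fderiv_fun_sum fun a' _ => (Qh_diffAt M π Rφ φ hRφ h s a').const_mul _]
  simp only [ContinuousLinearMap.sub_apply, ContinuousLinearMap.sum_apply]
  rw [Qh_fderiv M π Rφ φ v hRφ h s a]
  congr 1
  refine Finset.sum_congr rfl fun a' _ => ?_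
  rw [fderiv_const_mul (Qh_diffAt M π Rφ φ hRφ h s a')]
  simp only [ContinuousLinearMap.smul_apply, smul_eq_mul]
  rw [Qh_fderiv M π Rφ φ v hRφ h s a']

lemma IhCrit_fderiv (hRφ : ∀ s a, Differentiable ℝ (fun φ => Rφ φ s a))
    (Rbar : S → A → ℝ) (πT : S → A → ℝ) (h : ℕ) :
    fderiv ℝ (fun φ' => IhCrit M Rbar πT π h (Rφ φ')) φ v =
      IhCrit M Rbar πT π h (fun s' a' => fderiv ℝ (fun φ' => Rφ φ' s' a') φ v) := by
  simp only [IhCrit]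
  rw [fderiv_fun_sum fun s _ => DifferentiableAt.fun_sum fun a _ =>
    (Advh_diffAt M π Rφ φ hRφ h s a).const_mul _]
  simp only [ContinuousLinearMap.sum_apply]
  refine Finset.sum_congr rfl fun s _ => ?_
  rw [fderiv_fun_sum fun a _ => (Advh_diffAt M π Rφ φ hRφ h s a).const_mul _]
  simp only [ContinuousLinearMap.sum_apply]
  refine Finset.sum_congr rfl fun a _ => ?_
  rw [fderiv_const_mul (Advh_diffAt M π Rφ φ hRφ h s a)]
  simp only [ContinuousLinearMap.smul_apply, smul_eq_mul]
  rw [Advh_fderiv M π Rφ φ v hRφ h s a]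

lemma sum2_apply (f : S → A → EuclideanSpace ℝ (S × A)) (p : S × A) :
    (∑ s, ∑ a, f s a) p = ∑ s, ∑ a, f s a p := by
  rw [WithLp.ofLp_sum, Finset.sum_apply]
  exact Finset.sum_congr rfl fun s _ => by rw [WithLp.ofLp_sum, Finset.sum_apply]

lemma thetaNew_coord (θL : EuclideanSpace ℝ (S × A)) (α : ℝ) (h : ℕ) (R : S → A → ℝ)
    (p : S × A) :
    thetaNew M θL α h R p = θL p + α * ∑ s, ∑ a,
      (dP0 M (softmax θL) s * softmax θL s a * Qh M (softmax θL) R h s a) *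
        gradLogSoftmax θL s a p := by
  simp only [thetaNew, PiLp.add_apply, PiLp.smul_apply, smul_eq_mul, sum2_apply]

lemma thetaNew_fderiv (hRφ : ∀ s a, Differentiable ℝ (fun φ => Rφ φ s a))
    (θL : EuclideanSpace ℝ (S × A)) (α : ℝ) (h : ℕ) (p : S × A) :
    fderiv ℝ (fun φ' => thetaNew M θL α h (Rφ φ') p) φ v =
      α * ∑ s, ∑ a,
        (dP0 M (softmax θL) s * softmax θL s a *
          Qh M (softmax θL) (fun s' a' => fderiv ℝ (fun φ' => Rφ φ' s' a') φ v) h s a) *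
        gradLogSoftmax θL s a p := by
  have heq : (fun φ' => thetaNew M θL α h (Rφ φ') p) =
      fun φ' => θL p + α * ∑ s, ∑ a,
        (dP0 M (softmax θL) s * softmax θL s a * Qh M (softmax θL) (Rφ φ') h s a) *
          gradLogSoftmax θL s a p := by
    funext φ'; exact thetaNew_coord M θL α h (Rφ φ') p
  rw [heq]
  have hQ : ∀ s a, DifferentiableAt ℝ (fun φ' => Qh M (softmax θL) (Rφ φ') h s a) φ :=
    fun s a => Qh_diffAt M (softmax θL) Rφ φ hRφ h s a
  have hterm : ∀ s a, DifferentiableAt ℝ (fun φ' =>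
      (dP0 M (softmax θL) s * softmax θL s a * Qh M (softmax θL) (Rφ φ') h s a) *
        gradLogSoftmax θL s a p) φ :=
    fun s a => ((hQ s a).const_mul _).mul_const _
  rw [fderiv_const_add,
    fderiv_const_mul (DifferentiableAt.fun_sum fun s _ => DifferentiableAt.fun_sum fun a _ => hterm s a),
    fderiv_fun_sum fun s _ => DifferentiableAt.fun_sum fun a _ => hterm s a]
  simp only [ContinuousLinearMap.smul_apply, ContinuousLinearMap.sum_apply, smul_eq_mul]
  congr 1
  refine Finset.sum_congr rfl fun s _ => ?_
  rw [fderiv_fun_sum fun a _ => hterm s a]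
  simp only [ContinuousLinearMap.sum_apply]
  refine Finset.sum_congr rfl fun a _ => ?_
  rw [fderiv_mul_const ((hQ s a).const_mul _)]
  simp only [ContinuousLinearMap.smul_apply, smul_eq_mul]
  rw [fderiv_const_mul (hQ s a)]
  simp only [ContinuousLinearMap.smul_apply, smul_eq_mul]
  rw [Qh_fderiv M (softmax θL) Rφ φ v hRφ h s a]
  ring

end AuxD


set_option linter.unusedSectionVars false in
lemma final_alg [Nonempty A] (M : MDP S A) (Rbar πT : S → A → ℝ)
    (θL : EuclideanSpace ℝ (S × A)) (Q : S → A → ℝ) (α : ℝ) :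
    ∑ t, ∑ b, (α * ∑ s, ∑ a,
        (dP0 M (softmax θL) s * softmax θL s a * Q s a) * gradLogSoftmax θL s a (t, b)) *
        (dP0 M πT t * (softmax θL t b *
          (Adv M πT Rbar t b - ∑ a, softmax θL t a * Adv M πT Rbar t a))) =
    α * ∑ t, ∑ b, dP0 M (softmax θL) t * dP0 M πT t * softmax θL t b ^ 2 *
        (Adv M πT Rbar t b - ∑ a', softmax θL t a' * Adv M πT Rbar t a') *
        (Q t b - ∑ a', softmax θL t a' * Q t a') := by
  rw [Finset.mul_sum]
  refine Finset.sum_congr rfl fun t _ => ?_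
  rw [Finset.mul_sum]
  refine Finset.sum_congr rfl fun b _ => ?_
  have hin : (∑ s, ∑ a,
        (dP0 M (softmax θL) s * softmax θL s a * Q s a) * gradLogSoftmax θL s a (t, b))
      = dP0 M (softmax θL) t * softmax θL t b * (Q t b - ∑ a', softmax θL t a' * Q t a') := by
    rw [Finset.sum_eq_single t (fun s' _ hs' => Finset.sum_eq_zero fun a _ => by
        rw [gradLogSoftmax_apply]; simp [Prod.ext_iff, Ne.symm hs'])
      (fun ht => absurd (Finset.mem_univ t) ht)]
    have h1 : ∀ a, (dP0 M (softmax θL) t * softmax θL t a * Q t a) * gradLogSoftmax θL t a (t, b)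
        = (if b = a then dP0 M (softmax θL) t * softmax θL t a * Q t a else 0)
          - softmax θL t b * (dP0 M (softmax θL) t * (softmax θL t a * Q t a)) := by
      intro a
      rw [gradLogSoftmax_apply]
      by_cases hba : b = a
      · subst hba
        simp only [Prod.mk.injEq, true_and, if_pos rfl]
        simp
        ring
      · simp [Prod.ext_iff, hba]
        ring
    rw [Finset.sum_congr rfl fun a _ => h1 a, Finset.sum_sub_distrib,
      Finset.sum_ite_eq Finset.univ b (fun a => dP0 M (softmax θL) t * softmax θL t a * Q t a)]
    simp only [Finset.mem_univ, if_true]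
    rw [← Finset.mul_sum, ← Finset.mul_sum]
    ring
  rw [hin]
  ring

/-- **Proposition 1, exact form.** The product of (the transpose of) the
Jacobian of `θ_new` at `φ` with the gradient of the surrogate performance at `θ^L` equals
`α · ∇_φ I_h(R_φ | R̄, π^T, π^L)`, coordinate-wise in `j ∈ {1,…,d}`. -/
theorem prop1_exact_form
    {d : ℕ} (M : MDP S A) (Rbar : S → A → ℝ) (πT : S → A → ℝ) (hπT : IsPolicy πT)
    (θL : EuclideanSpace ℝ (S × A)) (h : ℕ) (α : ℝ) (hα : 0 < α)
    (Rφ : EuclideanSpace ℝ (Fin d) → S → A → ℝ)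
    (hRφ : ∀ s a, Differentiable ℝ (fun φ => Rφ φ s a))
    (φ : EuclideanSpace ℝ (Fin d)) :
    ∀ j : Fin d,
      (∑ p : S × A,
        fderiv ℝ (fun φ' => thetaNew M θL α h (Rφ φ') p) φ (EuclideanSpace.single j 1) *
          fderiv ℝ (Jsur M Rbar πT) θL (EuclideanSpace.single p 1)) =
      α * fderiv ℝ (fun φ' => IhCrit M Rbar πT (softmax θL) h (Rφ φ')) φ
            (EuclideanSpace.single j 1) := by
  intro j
  rcases isEmpty_or_nonempty A with hA | hA
  · haveI := hA
    have h0 : (fun φ' => IhCrit M Rbar πT (softmax θL) h (Rφ φ')) = fun _ => (0 : ℝ) := by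
      funext φ'
      simp [IhCrit]
    rw [h0]
    simp
  · haveI := hA
    rw [IhCrit_fderiv M (softmax θL) Rφ φ (EuclideanSpace.single j 1) hRφ Rbar πT h]
    simp only [IhCrit, Advh, Vh]
    rw [Fintype.sum_prod_type]
    rw [Finset.sum_congr rfl fun t _ => Finset.sum_congr rfl fun b _ => by
      rw [thetaNew_fderiv M Rφ φ (EuclideanSpace.single j 1) hRφ θL α h (t, b),
        fderiv_Jsur_single M Rbar πT θL t b]]
    exact final_alg M Rbar πT θL
      (Qh M (softmax θL)
        (fun s' a' => fderiv ℝ (fun φ' => Rφ φ' s' a') φ (EuclideanSpace.single j 1)) h) α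
end

section
/- (Invariance constraints preserve optimality of the target policy.) In a finite discounted MDP, let π^T be a deterministic policy that is optimal under the reward function R̄, and let R be another reward function satisfying Q^{π^T}_R(s,a) − V^{π^T}_R(s) ≤ Q^{π^T}_{R̄}(s,a) − V^{π^T}_{R̄}(s) for all states s and actions a. Then π^T is an optimal policy under R. -/
open scoped BigOperators

variable {S A : Type*} [Fintype S] [Fintype A] [DecidableEq S] [DecidableEq A]

/-! Write `V^π = r_π + γ P_π V^π` with the row-stochastic matrix `P_π` of the chain run under `π`.
For policies `π, π'` the difference `Δ = V^{π'} - V^π` solves `Δ = d + γ P_{π'} Δ`, where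
`d(s) = Σ_a π'(a|s) (Q^π(s,a) - V^π(s))`. Evaluating at a maximiser (resp. minimiser) of `Δ` and
using `γ < 1` gives `Δ ≤ 0` when `d ≤ 0` and `Δ ≥ d` when `d ≥ 0`. Hence a policy is optimal
exactly when all its advantages `Q^π - V^π` are nonpositive: for the converse, switching to an
action of positive advantage at a single state would strictly improve the value there. The
invariance hypothesis bounds the advantages of `π^T` under `R` by those under `R̄`, which are
nonpositive since `π^T` is optimal under `R̄`. -/

open Finset Matrix

section RowStochastic

variable {n : Type*} [Fintype n] [DecidableEq n] {K : Matrix n n ℝ}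

lemma mulVec_mono_of_mem_rowStochastic (hK : K ∈ rowStochastic ℝ n) {v w : n → ℝ}
    (hvw : v ≤ w) : K *ᵥ v ≤ K *ᵥ w := by
  intro i
  have := nonneg_mulVec_of_mem_rowStochastic hK (x := w - v) (fun j => sub_nonneg.2 (hvw j)) i
  rwa [mulVec_sub, Pi.sub_apply, sub_nonneg] at this

lemma mulVec_const_of_mem_rowStochastic (hK : K ∈ rowStochastic ℝ n) (c : ℝ) :
    (K *ᵥ fun _ => c) = fun _ => c := by
  have hc : (fun _ : n => c) = c • (1 : n → ℝ) := by ext; simp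
  rw [hc, mulVec_smul, one_vecMul_of_mem_rowStochastic hK]

lemma abs_mulVec_le_of_mem_rowStochastic (hK : K ∈ rowStochastic ℝ n) {v : n → ℝ} {C : ℝ}
    (hv : ∀ j, |v j| ≤ C) (i : n) : |(K *ᵥ v) i| ≤ C := by
  have hlo := mulVec_mono_of_mem_rowStochastic hK (v := fun _ => -C) (w := v)
    (fun j => neg_le_of_abs_le (hv j)) i
  have hhi := mulVec_mono_of_mem_rowStochastic hK (v := v) (w := fun _ => C)
    (fun j => le_of_abs_le (hv j)) i
  rw [mulVec_const_of_mem_rowStochastic hK] at hlo hhi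
  exact abs_le.2 ⟨hlo, hhi⟩

lemma nonpos_of_le_smul_mulVec (hK : K ∈ rowStochastic ℝ n) {γ : ℝ} (hγ0 : 0 ≤ γ)
    (hγ1 : γ < 1) {u : n → ℝ} (hu : u ≤ γ • (K *ᵥ u)) : u ≤ 0 := by
  intro i
  have : Nonempty n := ⟨i⟩
  obtain ⟨m, hm⟩ := Finite.exists_max u
  have hKu : (K *ᵥ u) m ≤ u m := by
    simpa [mulVec_const_of_mem_rowStochastic hK] using
      mulVec_mono_of_mem_rowStochastic hK (w := fun _ => u m) hm m
  have hm_le : u m ≤ γ * u m := (hu m).trans (mul_le_mul_of_nonneg_left hKu hγ0)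
  show u i ≤ 0
  nlinarith [hm i]

end RowStochastic

section Bellman

omit [DecidableEq A]

def policyKernel (M : MDP S A) (π : S → A → ℝ) : Matrix S S ℝ :=
  Matrix.of fun s s' => ∑ a, π s a * M.T s a s'

def policyReward (π R : S → A → ℝ) (s : S) : ℝ :=
  ∑ a, π s a * R s a

omit [Fintype S] in
lemma IsPolicy.update {π : S → A → ℝ} (hπ : IsPolicy π) (s : S) {p : A → ℝ}
    (hp0 : ∀ a, 0 ≤ p a) (hp1 : ∑ a, p a = 1) : IsPolicy (Function.update π s p) := by
  refine ⟨fun s' a => ?_, fun s' => ?_⟩ <;>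
    rcases eq_or_ne s' s with rfl | hs <;> simp [*, hπ.1, hπ.2]

omit [DecidableEq S] in
lemma abs_policyReward_le {π : S → A → ℝ} (hπ : IsPolicy π) (R : S → A → ℝ) (s : S) :
    |policyReward π R s| ≤ ‖R‖ := by
  calc |∑ a, π s a * R s a| ≤ ∑ a, π s a * ‖R‖ := by
        refine (abs_sum_le_sum_abs _ _).trans (sum_le_sum fun a _ => ?_)
        rw [abs_mul, abs_of_nonneg (hπ.1 s a), ← Real.norm_eq_abs]
        exact mul_le_mul_of_nonneg_left
          ((norm_le_pi_norm (R s) a).trans (norm_le_pi_norm R s)) (hπ.1 s a)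
    _ = ‖R‖ := by rw [← sum_mul, hπ.2, one_mul]

variable (M : MDP S A)

lemma policyKernel_mem_rowStochastic {π : S → A → ℝ} (hπ : IsPolicy π) :
    policyKernel M π ∈ rowStochastic ℝ S := by
  refine mem_rowStochastic_iff_sum.2
    ⟨fun s s' => sum_nonneg fun a _ => mul_nonneg (hπ.1 s a) (M.T_nonneg s a s'), fun s => ?_⟩
  simp only [policyKernel, of_apply]
  rw [sum_comm]
  simp [← mul_sum, M.T_sum_one, hπ.2]

lemma stateDist_eq_pow (π : S → A → ℝ) (s₀ : S) (t : ℕ) (s : S) :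
    stateDist M π s₀ t s = (policyKernel M π ^ t) s₀ s := by
  induction t generalizing s with
  | zero => simp [stateDist, one_apply, eq_comm]
  | succ t ih =>
    simp only [stateDist, pow_succ, mul_apply, policyKernel, of_apply, ih, mul_sum, mul_assoc]

lemma val_eq_tsum (π R : S → A → ℝ) (s₀ : S) :
    Val M π R s₀ = ∑' t : ℕ, M.disc ^ t * (policyKernel M π ^ t *ᵥ policyReward π R) s₀ := by
  simp only [Val, stateDist_eq_pow, mulVec, dotProduct, policyReward]

lemma abs_pow_mulVec_policyReward_le {π : S → A → ℝ} (hπ : IsPolicy π) (R : S → A → ℝ)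
    (t : ℕ) (s : S) : |(policyKernel M π ^ t *ᵥ policyReward π R) s| ≤ ‖R‖ :=
  abs_mulVec_le_of_mem_rowStochastic (pow_mem (policyKernel_mem_rowStochastic M hπ) t)
    (abs_policyReward_le hπ R) s

lemma summable_val_series {π : S → A → ℝ} (hπ : IsPolicy π) (R : S → A → ℝ) (s : S) :
    Summable fun t : ℕ => M.disc ^ t * (policyKernel M π ^ t *ᵥ policyReward π R) s := by
  refine .of_norm_bounded
    ((summable_geometric_of_lt_one M.disc_nonneg M.disc_lt_one).mul_right ‖R‖) fun t => ?_
  rw [norm_mul, norm_pow, Real.norm_of_nonneg M.disc_nonneg, Real.norm_eq_abs]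
  exact mul_le_mul_of_nonneg_left (abs_pow_mulVec_policyReward_le M hπ R t s)
    (pow_nonneg M.disc_nonneg t)

lemma val_le_norm_div {π : S → A → ℝ} (hπ : IsPolicy π) (R : S → A → ℝ) (s : S) :
    Val M π R s ≤ ‖R‖ / (1 - M.disc) := by
  have hgeom := summable_geometric_of_lt_one M.disc_nonneg M.disc_lt_one
  calc Val M π R s ≤ ∑' t : ℕ, M.disc ^ t * ‖R‖ := by
        rw [val_eq_tsum]
        refine (summable_val_series M hπ R s).tsum_le_tsum (fun t => ?_) (hgeom.mul_right _)
        exact mul_le_mul_of_nonneg_left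
          ((le_abs_self _).trans (abs_pow_mulVec_policyReward_le M hπ R t s))
          (pow_nonneg M.disc_nonneg t)
    _ = ‖R‖ / (1 - M.disc) := by
        rw [tsum_mul_right, tsum_geometric_of_lt_one M.disc_nonneg M.disc_lt_one, inv_mul_eq_div]

lemma bddAbove_val (R : S → A → ℝ) (s : S) :
    BddAbove {v : ℝ | ∃ π, IsPolicy π ∧ Val M π R s = v} := by
  refine ⟨‖R‖ / (1 - M.disc), ?_⟩
  rintro _ ⟨π, hπ, rfl⟩
  exact val_le_norm_div M hπ R s

lemma val_eq_policyReward_add {π : S → A → ℝ} (hπ : IsPolicy π) (R : S → A → ℝ) :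
    Val M π R = policyReward π R + M.disc • (policyKernel M π *ᵥ Val M π R) := by
  ext s₀
  set P := policyKernel M π
  set r := policyReward π R
  have hterm : ∀ t : ℕ, M.disc ^ (t + 1) * (P ^ (t + 1) *ᵥ r) s₀
      = M.disc * ∑ s, P s₀ s * (M.disc ^ t * (P ^ t *ᵥ r) s) := by
    intro t
    rw [pow_succ', pow_succ', ← mulVec_mulVec]
    simp only [mulVec, dotProduct, mul_sum]
    exact sum_congr rfl fun _ _ => sum_congr rfl fun _ _ => by ring
  rw [val_eq_tsum, (summable_val_series M hπ R s₀).tsum_eq_zero_add, tsum_congr hterm,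
    tsum_mul_left, Summable.tsum_finsetSum fun s _ => (summable_val_series M hπ R s).mul_left _]
  simp only [pow_zero, one_mul, one_mulVec]
  simp only [Pi.add_apply, Pi.smul_apply, smul_eq_mul, mulVec, dotProduct, tsum_mul_left,
    val_eq_tsum]
  rfl

lemma sum_mul_qval (π' π R : S → A → ℝ) (s : S) :
    ∑ a, π' s a * Qval M π R s a
      = policyReward π' R s + M.disc * (policyKernel M π' *ᵥ Val M π R) s := by
  simp only [Qval, policyReward, policyKernel, mulVec, dotProduct, of_apply, mul_add,
    sum_add_distrib, mul_sum, sum_mul]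
  exact congrArg _ (sum_comm.trans (sum_congr rfl fun _ _ => sum_congr rfl fun _ _ => by ring))

lemma val_eq_sum_mul_qval {π : S → A → ℝ} (hπ : IsPolicy π) (R : S → A → ℝ) (s : S) :
    Val M π R s = ∑ a, π s a * Qval M π R s a := by
  rw [sum_mul_qval]
  exact congrFun (val_eq_policyReward_add M hπ R) s

lemma val_sub_val_eq {π' : S → A → ℝ} (hπ' : IsPolicy π') (π R : S → A → ℝ) :
    Val M π' R - Val M π R
      = (fun s => ∑ a, π' s a * Qval M π R s a - Val M π R s)
        + M.disc • (policyKernel M π' *ᵥ (Val M π' R - Val M π R)) := by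
  ext s
  have hπ's := congrFun (val_eq_policyReward_add M hπ' R) s
  simp only [Pi.sub_apply, Pi.add_apply, Pi.smul_apply, smul_eq_mul, mulVec_sub,
    sum_mul_qval] at hπ's ⊢
  linarith

lemma val_le_of_forall_sum_mul_qval_le {π' π : S → A → ℝ} {R : S → A → ℝ} (hπ' : IsPolicy π')
    (h : ∀ s, ∑ a, π' s a * Qval M π R s a ≤ Val M π R s) : Val M π' R ≤ Val M π R := by
  rw [← sub_nonpos]
  refine nonpos_of_le_smul_mulVec (policyKernel_mem_rowStochastic M hπ') M.disc_nonneg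
    M.disc_lt_one fun s => ?_
  have hs := congrFun (val_sub_val_eq M hπ' π R) s
  simp only [Pi.add_apply, Pi.smul_apply] at hs ⊢
  linarith [h s]

lemma sum_mul_qval_le_val_of_forall_le {π' π : S → A → ℝ} {R : S → A → ℝ} (hπ' : IsPolicy π')
    (h : ∀ s, Val M π R s ≤ ∑ a, π' s a * Qval M π R s a) (s : S) :
    ∑ a, π' s a * Qval M π R s a ≤ Val M π' R s := by
  have hdiff := val_sub_val_eq M hπ' π R
  have hle : Val M π R - Val M π' R ≤ 0 := by
    refine nonpos_of_le_smul_mulVec (policyKernel_mem_rowStochastic M hπ') M.disc_nonneg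
      M.disc_lt_one fun s => ?_
    have hs := congrFun hdiff s
    simp only [Pi.add_apply, Pi.sub_apply, Pi.smul_apply, smul_eq_mul, mulVec_sub] at hs ⊢
    linarith [h s]
  have hnext : 0 ≤ (policyKernel M π' *ᵥ (Val M π' R - Val M π R)) s :=
    nonneg_mulVec_of_mem_rowStochastic (policyKernel_mem_rowStochastic M hπ')
      (fun s' => sub_nonneg.2 (by simpa using hle s')) s
  have hs := congrFun hdiff s
  simp only [Pi.add_apply, Pi.sub_apply, Pi.smul_apply, smul_eq_mul] at hs
  linarith [mul_nonneg M.disc_nonneg hnext]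

lemma isOptimal_of_qval_le_val {π R : S → A → ℝ} (hπ : IsPolicy π)
    (h : ∀ s a, Qval M π R s a ≤ Val M π R s) : IsOptimal M R π := by
  intro s
  refine le_antisymm (le_csSup (bddAbove_val M R s) ⟨π, hπ, rfl⟩)
    (csSup_le ⟨_, π, hπ, rfl⟩ ?_)
  rintro _ ⟨π', hπ', rfl⟩
  refine val_le_of_forall_sum_mul_qval_le M hπ' (fun s => ?_) s
  calc ∑ a, π' s a * Qval M π R s a ≤ ∑ a, π' s a * Val M π R s :=
        sum_le_sum fun a _ => mul_le_mul_of_nonneg_left (h s a) (hπ'.1 s a)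
    _ = Val M π R s := by rw [← sum_mul, hπ'.2, one_mul]

lemma qval_le_val_of_isOptimal {π R : S → A → ℝ} (hπ : IsPolicy π) (hopt : IsOptimal M R π)
    (s : S) (a : A) : Qval M π R s a ≤ Val M π R s := by
  classical
  by_contra! hlt
  set π' := Function.update π s (Pi.single a 1)
  have hπ' : IsPolicy π' := hπ.update s
    (Pi.single_nonneg.2 zero_le_one : (0 : A → ℝ) ≤ Pi.single a 1) (by simp)
  have hπ'_qval : ∀ s', Val M π R s' ≤ ∑ b, π' s' b * Qval M π R s' b := by
    intro s'
    rcases eq_or_ne s' s with rfl | hs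
    · simpa [π', Pi.single_apply, ite_mul] using hlt.le
    · simpa [π', hs] using (val_eq_sum_mul_qval M hπ R s').le
  have himprove := sum_mul_qval_le_val_of_forall_le M hπ' hπ'_qval s
  simp only [π', Function.update_self, Pi.single_apply, ite_mul, one_mul, zero_mul,
    sum_ite_eq', mem_univ, if_true] at himprove
  have hπ'_le : Val M π' R s ≤ Vstar M R s := le_csSup (bddAbove_val M R s) ⟨π', hπ', rfl⟩
  linarith [hopt s]

end Bellman

omit [Fintype S] [DecidableEq S] in
lemma detPol_isPolicy (π : S → A) : IsPolicy (detPol π) :=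
  ⟨fun s a => by unfold detPol; split_ifs <;> norm_num, fun s => by simp [detPol]⟩

/-- **Invariance constraints preserve optimality of the target policy.** -/
theorem invariance_preserves_target_optimality
    (M : MDP S A) (Rbar R : S → A → ℝ) (πT : S → A)
    (hπT : IsOptimal M Rbar (detPol πT))
    (hinv : ∀ s a,
      Qval M (detPol πT) R s a - Val M (detPol πT) R s ≤
        Qval M (detPol πT) Rbar s a - Val M (detPol πT) Rbar s) :
    IsOptimal M R (detPol πT) :=
  isOptimal_of_qval_le_val M (detPol_isPolicy πT) fun s a => by
    linarith [hinv s a, qval_le_val_of_isOptimal M (detPol_isPolicy πT) hπT s a]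
end

section
/- (Invariance constraints introduce no new optimal policies.) In a finite discounted MDP, let π^T be a deterministic policy that is optimal under the reward function R̄, and let R be another reward function satisfying Q^{π^T}_R(s,a) − V^{π^T}_R(s) ≤ Q^{π^T}_{R̄}(s,a) − V^{π^T}_{R̄}(s) for all states s and actions a. Then every policy π that is optimal under R is also optimal under R̄. -/
open scoped BigOperators

variable {S A : Type*} [Fintype S] [Fintype A] [DecidableEq S] [DecidableEq A]

set_option linter.unusedSectionVars false

lemma isPolicy_detPol (π : S → A) : IsPolicy (detPol π : S → A → ℝ) :=
  ⟨fun s a => by unfold detPol; split <;> norm_num, fun s => by simp [detPol]⟩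

lemma stateDist_nonneg (M : MDP S A) {π : S → A → ℝ} (hπ : IsPolicy π) (s0 : S) :
    ∀ t s, 0 ≤ stateDist M π s0 t s := by
  intro t
  induction t with
  | zero => intro s; simp only [stateDist]; split <;> norm_num
  | succ t ih =>
      intro s'
      simp only [stateDist]
      refine Finset.sum_nonneg fun s _ => Finset.sum_nonneg fun a _ => ?_
      exact mul_nonneg (mul_nonneg (ih s) (hπ.1 s a)) (M.T_nonneg s a s')

lemma stateDist_sum_one (M : MDP S A) {π : S → A → ℝ} (hπ : IsPolicy π) (s0 : S) :
    ∀ t, ∑ s, stateDist M π s0 t s = 1 := by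
  intro t
  induction t with
  | zero => simp [stateDist]
  | succ t ih =>
      simp only [stateDist]
      rw [Finset.sum_comm]
      have : ∀ s ∈ Finset.univ (α := S),
          ∑ s' : S, ∑ a, stateDist M π s0 t s * π s a * M.T s a s'
            = stateDist M π s0 t s := by
        intro s _
        rw [Finset.sum_comm]
        have : ∀ a ∈ Finset.univ (α := A),
            ∑ s' : S, stateDist M π s0 t s * π s a * M.T s a s'
              = stateDist M π s0 t s * π s a := by
          intro a _
          rw [← Finset.mul_sum, M.T_sum_one, mul_one]
        rw [Finset.sum_congr rfl this, ← Finset.mul_sum, hπ.2, mul_one]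
      rw [Finset.sum_congr rfl this, ih]

lemma stateDist_le_one (M : MDP S A) {π : S → A → ℝ} (hπ : IsPolicy π) (s0 : S) (t : ℕ) (s : S) :
    stateDist M π s0 t s ≤ 1 := by
  have h := stateDist_sum_one M hπ s0 t
  calc stateDist M π s0 t s ≤ ∑ s', stateDist M π s0 t s' :=
        Finset.single_le_sum (fun s' _ => stateDist_nonneg M hπ s0 t s') (Finset.mem_univ s)
    _ = 1 := h

lemma pol_le_one {π : S → A → ℝ} (hπ : IsPolicy π) (s : S) (a : A) : π s a ≤ 1 := by
  have h := hπ.2 s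
  calc π s a ≤ ∑ b, π s b := Finset.single_le_sum (fun b _ => hπ.1 s b) (Finset.mem_univ a)
    _ = 1 := h

noncomputable def Rbound (R : S → A → ℝ) : ℝ := ∑ s, ∑ a, |R s a|

lemma inner_abs_le (R : S → A → ℝ) {π : S → A → ℝ} (hπ : IsPolicy π) (s : S) :
    |∑ a, π s a * R s a| ≤ ∑ a, |R s a| := by
  calc |∑ a, π s a * R s a| ≤ ∑ a, |π s a * R s a| := Finset.abs_sum_le_sum_abs _ _
    _ ≤ ∑ a, |R s a| := by
        refine Finset.sum_le_sum fun a _ => ?_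
        rw [abs_mul, abs_of_nonneg (hπ.1 s a)]
        exact mul_le_of_le_one_left (abs_nonneg _) (pol_le_one hπ s a)

lemma term_abs_le (M : MDP S A) (R : S → A → ℝ) {π : S → A → ℝ} (hπ : IsPolicy π)
    (s0 : S) (t : ℕ) :
    |∑ s, stateDist M π s0 t s * ∑ a, π s a * R s a| ≤ Rbound R := by
  calc |∑ s, stateDist M π s0 t s * ∑ a, π s a * R s a|
      ≤ ∑ s, |stateDist M π s0 t s * ∑ a, π s a * R s a| := Finset.abs_sum_le_sum_abs _ _
    _ ≤ ∑ s, ∑ a, |R s a| := by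
        refine Finset.sum_le_sum fun s _ => ?_
        rw [abs_mul, abs_of_nonneg (stateDist_nonneg M hπ s0 t s)]
        calc stateDist M π s0 t s * |∑ a, π s a * R s a|
            ≤ 1 * (∑ a, |R s a|) := by
              refine mul_le_mul (stateDist_le_one M hπ s0 t s) (inner_abs_le R hπ s)
                (abs_nonneg _) zero_le_one
          _ = ∑ a, |R s a| := one_mul _

lemma summable_val (M : MDP S A) (R : S → A → ℝ) {π : S → A → ℝ} (hπ : IsPolicy π) (s0 : S) :
    Summable (fun t : ℕ => M.disc ^ t * ∑ s, stateDist M π s0 t s * ∑ a, π s a * R s a) := by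
  refine Summable.of_norm_bounded (g := fun t => Rbound R * M.disc ^ t)
    ((summable_geometric_of_lt_one M.disc_nonneg M.disc_lt_one).mul_left _) fun t => ?_
  rw [Real.norm_eq_abs, abs_mul, abs_pow, abs_of_nonneg M.disc_nonneg, mul_comm]
  exact mul_le_mul_of_nonneg_right (term_abs_le M R hπ s0 t) (pow_nonneg M.disc_nonneg t)

lemma val_abs_le (M : MDP S A) (R : S → A → ℝ) {π : S → A → ℝ} (hπ : IsPolicy π) (s0 : S) :
    |Val M π R s0| ≤ Rbound R / (1 - M.disc) := by
  have hsum := summable_val M R hπ s0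
  have h1 : |Val M π R s0| ≤ ∑' t : ℕ, Rbound R * M.disc ^ t := by
    refine (norm_tsum_le_tsum_norm ?_).trans (Summable.tsum_le_tsum ?_ hsum.norm
      ((summable_geometric_of_lt_one M.disc_nonneg M.disc_lt_one).mul_left _))
    · exact hsum.norm
    · intro t
      rw [Real.norm_eq_abs, abs_mul, abs_pow, abs_of_nonneg M.disc_nonneg, mul_comm]
      exact mul_le_mul_of_nonneg_right (term_abs_le M R hπ s0 t) (pow_nonneg M.disc_nonneg t)
  rw [tsum_mul_left, tsum_geometric_of_lt_one M.disc_nonneg M.disc_lt_one] at h1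
  rw [div_eq_mul_inv]
  exact h1

lemma val_mono (M : MDP S A) {R1 R2 : S → A → ℝ} (h : ∀ s a, R1 s a ≤ R2 s a)
    {π : S → A → ℝ} (hπ : IsPolicy π) (s0 : S) :
    Val M π R1 s0 ≤ Val M π R2 s0 := by
  refine Summable.tsum_le_tsum (fun t => ?_) (summable_val M R1 hπ s0) (summable_val M R2 hπ s0)
  refine mul_le_mul_of_nonneg_left ?_ (pow_nonneg M.disc_nonneg t)
  refine Finset.sum_le_sum fun s _ => ?_
  refine mul_le_mul_of_nonneg_left ?_ (stateDist_nonneg M hπ s0 t s)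
  exact Finset.sum_le_sum fun a _ => mul_le_mul_of_nonneg_left (h s a) (hπ.1 s a)

lemma sum_swap4 {α β γ δ : Type*} [Fintype α] [Fintype β] [Fintype γ] [Fintype δ]
    (f : α → β → γ → δ → ℝ) :
    ∑ a, ∑ b, ∑ c, ∑ d, f a b c d = ∑ c, ∑ d, ∑ a, ∑ b, f a b c d := by
  calc ∑ a, ∑ b, ∑ c, ∑ d, f a b c d
      = ∑ a, ∑ c, ∑ b, ∑ d, f a b c d :=
        Finset.sum_congr rfl fun a _ => Finset.sum_comm
    _ = ∑ c, ∑ a, ∑ b, ∑ d, f a b c d := Finset.sum_comm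
    _ = ∑ c, ∑ a, ∑ d, ∑ b, f a b c d :=
        Finset.sum_congr rfl fun c _ => Finset.sum_congr rfl fun a _ => Finset.sum_comm
    _ = ∑ c, ∑ d, ∑ a, ∑ b, f a b c d :=
        Finset.sum_congr rfl fun c _ => Finset.sum_comm

lemma firstStep (M : MDP S A) (π : S → A → ℝ) (s0 : S) :
    ∀ t s', stateDist M π s0 (t+1) s'
      = ∑ a, π s0 a * ∑ s1, M.T s0 a s1 * stateDist M π s1 t s' := by
  intro t
  induction t with
  | zero =>
      intro s'
      simp only [stateDist]
      simp [ite_mul, mul_ite, mul_one, mul_zero, zero_mul]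
  | succ t ih =>
      intro s'
      have lhs : stateDist M π s0 (t+1+1) s'
          = ∑ s, ∑ a, stateDist M π s0 (t+1) s * π s a * M.T s a s' := rfl
      rw [lhs]
      have : ∀ s ∈ Finset.univ (α := S), ∀ a ∈ Finset.univ (α := A),
          stateDist M π s0 (t+1) s * π s a * M.T s a s'
            = ∑ b, ∑ s1, π s0 b * M.T s0 b s1 * (stateDist M π s1 t s * π s a * M.T s a s') := by
        intro s _ a _
        rw [ih s]
        rw [Finset.sum_mul, Finset.sum_mul]
        refine Finset.sum_congr rfl fun b _ => ?_
        rw [Finset.mul_sum, Finset.sum_mul, Finset.sum_mul]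
        refine Finset.sum_congr rfl fun s1 _ => ?_
        ring
      calc ∑ s, ∑ a, stateDist M π s0 (t+1) s * π s a * M.T s a s'
          = ∑ s, ∑ a, ∑ b, ∑ s1, π s0 b * M.T s0 b s1 *
              (stateDist M π s1 t s * π s a * M.T s a s') := by
            refine Finset.sum_congr rfl fun s hs => Finset.sum_congr rfl fun a ha => ?_
            exact this s hs a ha
        _ = ∑ b, ∑ s1, π s0 b * M.T s0 b s1 * ∑ s, ∑ a,
              (stateDist M π s1 t s * π s a * M.T s a s') := by
            rw [sum_swap4 (fun s a b s1 => π s0 b * M.T s0 b s1 *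
              (stateDist M π s1 t s * π s a * M.T s a s'))]
            refine Finset.sum_congr rfl fun b _ => Finset.sum_congr rfl fun s1 _ => ?_
            rw [Finset.mul_sum]
            refine Finset.sum_congr rfl fun s _ => ?_
            rw [Finset.mul_sum]
        _ = ∑ b, π s0 b * ∑ s1, M.T s0 b s1 * stateDist M π s1 (t+1) s' := by
            refine Finset.sum_congr rfl fun b _ => ?_
            rw [Finset.mul_sum]
            refine Finset.sum_congr rfl fun s1 _ => ?_
            have : stateDist M π s1 (t+1) s' = ∑ s, ∑ a, stateDist M π s1 t s * π s a * M.T s a s' := rfl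
            rw [this, mul_assoc]

lemma sum_swap3 {α β γ : Type*} [Fintype α] [Fintype β] [Fintype γ]
    (f : α → β → γ → ℝ) :
    ∑ a, ∑ b, ∑ c, f a b c = ∑ b, ∑ c, ∑ a, f a b c := by
  calc ∑ a, ∑ b, ∑ c, f a b c = ∑ b, ∑ a, ∑ c, f a b c := Finset.sum_comm
    _ = ∑ b, ∑ c, ∑ a, f a b c := Finset.sum_congr rfl fun b _ => Finset.sum_comm

lemma bellman (M : MDP S A) (R : S → A → ℝ) {π : S → A → ℝ} (hπ : IsPolicy π) (s0 : S) :
    Val M π R s0 = (∑ a, π s0 a * R s0 a)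
      + M.disc * ∑ a, π s0 a * ∑ s1, M.T s0 a s1 * Val M π R s1 := by
  set c : ℕ → S → ℝ := fun t s1 => ∑ s, stateDist M π s1 t s * ∑ a, π s a * R s a with hc
  have hsum : ∀ s1, Summable (fun t : ℕ => M.disc ^ t * c t s1) := fun s1 =>
    summable_val M R hπ s1
  have key : ∀ t : ℕ, M.disc ^ (t+1) * c (t+1) s0
      = ∑ a, ∑ s1, π s0 a * M.T s0 a s1 * M.disc * (M.disc ^ t * c t s1) := by
    intro t
    have h1 : c (t+1) s0 = ∑ a, ∑ s1, π s0 a * M.T s0 a s1 * c t s1 := by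
      calc c (t+1) s0
          = ∑ s, (∑ a, π s0 a * ∑ s1, M.T s0 a s1 * stateDist M π s1 t s)
              * ∑ a, π s a * R s a := by
            refine Finset.sum_congr rfl fun s _ => ?_
            rw [firstStep M π s0 t s]
        _ = ∑ s, ∑ a, ∑ s1, π s0 a * M.T s0 a s1
              * (stateDist M π s1 t s * ∑ b, π s b * R s b) := by
            refine Finset.sum_congr rfl fun s _ => ?_
            rw [Finset.sum_mul]
            refine Finset.sum_congr rfl fun a _ => ?_
            rw [show π s0 a * (∑ s1, M.T s0 a s1 * stateDist M π s1 t s)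
                = ∑ s1, π s0 a * (M.T s0 a s1 * stateDist M π s1 t s) from Finset.mul_sum _ _ _,
              Finset.sum_mul]
            refine Finset.sum_congr rfl fun s1 _ => ?_
            ring
        _ = ∑ a, ∑ s1, ∑ s, π s0 a * M.T s0 a s1
              * (stateDist M π s1 t s * ∑ b, π s b * R s b) := sum_swap3 _
        _ = ∑ a, ∑ s1, π s0 a * M.T s0 a s1 * c t s1 := by
            refine Finset.sum_congr rfl fun a _ => Finset.sum_congr rfl fun s1 _ => ?_
            rw [← Finset.mul_sum]
    rw [h1, Finset.mul_sum]
    refine Finset.sum_congr rfl fun a _ => ?_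
    rw [Finset.mul_sum]
    refine Finset.sum_congr rfl fun s1 _ => ?_
    rw [pow_succ]
    ring
  have h0 : M.disc ^ 0 * c 0 s0 = ∑ a, π s0 a * R s0 a := by
    simp [hc, stateDist, ite_mul]
  calc Val M π R s0 = ∑' t : ℕ, M.disc ^ t * c t s0 := rfl
    _ = M.disc ^ 0 * c 0 s0 + ∑' t : ℕ, M.disc ^ (t+1) * c (t+1) s0 :=
        Summable.tsum_eq_zero_add (hsum s0)
    _ = (∑ a, π s0 a * R s0 a)
        + ∑' t : ℕ, ∑ a, ∑ s1, π s0 a * M.T s0 a s1 * M.disc * (M.disc ^ t * c t s1) := by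
        rw [h0, tsum_congr key]
    _ = (∑ a, π s0 a * R s0 a)
        + ∑ a, ∑ s1, ∑' t : ℕ, π s0 a * M.T s0 a s1 * M.disc * (M.disc ^ t * c t s1) := by
        rw [Summable.tsum_finsetSum fun a _ => summable_sum fun s1 _ => (hsum s1).mul_left _]
        congr 1
        exact Finset.sum_congr rfl fun a _ => Summable.tsum_finsetSum fun s1 _ => (hsum s1).mul_left _
    _ = (∑ a, π s0 a * R s0 a)
        + ∑ a, ∑ s1, π s0 a * M.T s0 a s1 * M.disc * Val M π R s1 := by
        congr 1
        exact Finset.sum_congr rfl fun a _ => Finset.sum_congr rfl fun s1 _ => tsum_mul_left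
    _ = (∑ a, π s0 a * R s0 a)
        + M.disc * ∑ a, π s0 a * ∑ s1, M.T s0 a s1 * Val M π R s1 := by
        congr 1
        rw [Finset.mul_sum]
        refine Finset.sum_congr rfl fun a _ => ?_
        rw [Finset.mul_sum, Finset.mul_sum]
        refine Finset.sum_congr rfl fun s1 _ => ?_
        ring

lemma contraction_zero (M : MDP S A) {π : S → A → ℝ} (hπ : IsPolicy π) (f : S → ℝ)
    (hf : ∀ s, f s = M.disc * ∑ a, π s a * ∑ s', M.T s a s' * f s') : ∀ s, f s = 0 := by
  intro s
  have hne : (Finset.univ : Finset S).Nonempty := ⟨s, Finset.mem_univ s⟩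
  obtain ⟨s0, _, hmax⟩ := Finset.exists_max_image Finset.univ (fun s => |f s|) hne
  have hb : ∀ s', |f s'| ≤ |f s0| := fun s' => hmax s' (Finset.mem_univ s')
  have hstep : ∀ s', |f s'| ≤ M.disc * |f s0| := by
    intro s'
    rw [hf s', abs_mul, abs_of_nonneg M.disc_nonneg]
    refine mul_le_mul_of_nonneg_left ?_ M.disc_nonneg
    calc |∑ a, π s' a * ∑ t, M.T s' a t * f t|
        ≤ ∑ a, |π s' a * ∑ t, M.T s' a t * f t| := Finset.abs_sum_le_sum_abs _ _
      _ ≤ ∑ a, π s' a * |f s0| := by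
          refine Finset.sum_le_sum fun a _ => ?_
          rw [abs_mul, abs_of_nonneg (hπ.1 s' a)]
          refine mul_le_mul_of_nonneg_left ?_ (hπ.1 s' a)
          calc |∑ t, M.T s' a t * f t| ≤ ∑ t, |M.T s' a t * f t| :=
                Finset.abs_sum_le_sum_abs _ _
            _ ≤ ∑ t, M.T s' a t * |f s0| := by
                refine Finset.sum_le_sum fun t _ => ?_
                rw [abs_mul, abs_of_nonneg (M.T_nonneg s' a t)]
                exact mul_le_mul_of_nonneg_left (hb t) (M.T_nonneg s' a t)
            _ = |f s0| := by rw [← Finset.sum_mul, M.T_sum_one, one_mul]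
      _ = |f s0| := by rw [← Finset.sum_mul, hπ.2, one_mul]
  have h0 : |f s0| = 0 := by
    have h1 := hstep s0
    have h2 : (0:ℝ) ≤ |f s0| := abs_nonneg _
    nlinarith [M.disc_lt_one]
  have : |f s| ≤ 0 := h0 ▸ hstep s |>.trans (by nlinarith [abs_nonneg (f s0), M.disc_nonneg, h0])
  exact abs_eq_zero.mp (le_antisymm this (abs_nonneg _))

lemma pdl (M : MDP S A) (R : S → A → ℝ) {π : S → A → ℝ} (π' : S → A → ℝ)
    (hπ : IsPolicy π) :
    ∀ s, Val M π R s - Val M π' R s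
      = Val M π (fun s a => R s a + M.disc * (∑ s', M.T s a s' * Val M π' R s')
          - Val M π' R s) s := by
  set G : S → A → ℝ := fun s a => R s a + M.disc * (∑ s', M.T s a s' * Val M π' R s')
      - Val M π' R s with hGdef
  set f : S → ℝ := fun s => Val M π R s - Val M π' R s - Val M π G s with hfdef
  have hzero : ∀ s, f s = 0 := by
    refine contraction_zero M hπ f fun s => ?_
    have hG : ∑ a, π s a * G s a
        = (∑ a, π s a * R s a)
          + M.disc * (∑ a, π s a * ∑ s', M.T s a s' * Val M π' R s')
          - Val M π' R s := by
      calc ∑ a, π s a * G s a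
          = ∑ a, (π s a * R s a
              + M.disc * (π s a * ∑ s', M.T s a s' * Val M π' R s')
              - π s a * Val M π' R s) := by
            refine Finset.sum_congr rfl fun a _ => ?_
            simp only [hGdef]; ring
        _ = _ := by
            rw [Finset.sum_sub_distrib, Finset.sum_add_distrib, ← Finset.mul_sum,
              ← Finset.sum_mul, hπ.2, one_mul]
    have hRHS : ∑ a, π s a * ∑ s', M.T s a s' * f s'
        = (∑ a, π s a * ∑ s', M.T s a s' * Val M π R s')
          - (∑ a, π s a * ∑ s', M.T s a s' * Val M π' R s')
          - (∑ a, π s a * ∑ s', M.T s a s' * Val M π G s') := by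
      rw [← Finset.sum_sub_distrib, ← Finset.sum_sub_distrib]
      refine Finset.sum_congr rfl fun a _ => ?_
      rw [← mul_sub, ← mul_sub]
      congr 1
      rw [← Finset.sum_sub_distrib, ← Finset.sum_sub_distrib]
      refine Finset.sum_congr rfl fun s' _ => ?_
      simp only [hfdef]; ring
    calc f s = Val M π R s - Val M π' R s - Val M π G s := rfl
      _ = M.disc * ∑ a, π s a * ∑ s', M.T s a s' * f s' := by
          rw [bellman M R hπ s, bellman M G hπ s, hG, hRHS]
          ring
  intro s
  have := hzero s
  simp only [hfdef] at this
  linarith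

/-- **Invariance constraints introduce no new optimal policies.** -/
theorem invariance_no_new_optimal_policies
    (M : MDP S A) (Rbar R : S → A → ℝ) (πT : S → A)
    (hπT : IsOptimal M Rbar (detPol πT))
    (hinv : ∀ s a,
      Qval M (detPol πT) R s a - Val M (detPol πT) R s ≤
        Qval M (detPol πT) Rbar s a - Val M (detPol πT) Rbar s) :
    ∀ π : S → A → ℝ, IsPolicy π → IsOptimal M R π → IsOptimal M Rbar π := by
  intro π hπ hopt s
  have hpT : IsPolicy (detPol πT : S → A → ℝ) := isPolicy_detPol πT
  have hbdd : ∀ (R' : S → A → ℝ) (s : S),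
      BddAbove {v : ℝ | ∃ π, IsPolicy π ∧ Val M π R' s = v} := by
    intro R' s
    refine ⟨Rbound R' / (1 - M.disc), ?_⟩
    rintro v ⟨π', hπ', rfl⟩
    exact le_of_abs_le (val_abs_le M R' hπ' s)
  have hmem : ∀ (R' : S → A → ℝ) (π' : S → A → ℝ), IsPolicy π' →
      ∀ s, Val M π' R' s ≤ Vstar M R' s :=
    fun R' π' hπ' s => le_csSup (hbdd R' s) ⟨π', hπ', rfl⟩
  have h1 : ∀ s, Val M (detPol πT) R s ≤ Val M π R s := by
    intro s
    rw [hopt s]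
    exact hmem R (detPol πT) hpT s
  have hG : ∀ s a,
      R s a + M.disc * (∑ s', M.T s a s' * Val M (detPol πT) R s')
          - Val M (detPol πT) R s
        ≤ Rbar s a + M.disc * (∑ s', M.T s a s' * Val M (detPol πT) Rbar s')
          - Val M (detPol πT) Rbar s := by
    intro s a
    have := hinv s a
    simp only [Qval] at this
    linarith
  have h2 : ∀ s, Val M (detPol πT) Rbar s ≤ Val M π Rbar s := by
    intro s
    have e1 := pdl M R (detPol πT) hπ s
    have e2 := pdl M Rbar (detPol πT) hπ s
    have mono := val_mono M hG hπ s
    have := h1 s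
    linarith
  refine le_antisymm (hmem Rbar π hπ s) ?_
  calc Vstar M Rbar s = Val M (detPol πT) Rbar s := (hπT s).symm
    _ ≤ Val M π Rbar s := h2 s
end
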